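/- arXiv:2410.04695 — 3 statements merged into one kernel-verified Lean document; each statement's English description precedes it below -/
import Mathlib

section
/- Let X ⊆ ℝⁿ be nonempty closed convex and f : ℝⁿ → ℝ ∪ {+∞} proper lsc convex with dom f ∩ X unbounded. If X^∞ ∩ {d : f^∞(d) ≤ 0} ≠ {0}, then there exists a sequence uₖ → 0 in ℝⁿ such that argmin_{x∈X}(f(x) − ⟨uₖ, x⟩) = ∅ for every k. -/
open Filter Topology Metric Set RealInnerProductSpace

noncomputable section

variable {E : Type*} [NormedAddCommGroup E] [InnerProductSpace ℝ E]

/-- Asymptotic cone of a set. -/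
def asympCone (X : Set E) : Set E :=
  {u | ∃ t : ℕ → ℝ, ∃ x : ℕ → E,
    Tendsto t atTop atTop ∧ (∀ k, x k ∈ X) ∧
    Tendsto (fun k => (t k)⁻¹ • x k) atTop (𝓝 u)}

/-- Asymptotic function of an extended-real-valued function. -/
def asympFun (f : E → EReal) (d : E) : EReal :=
  sInf {L : EReal | ∃ t : ℕ → ℝ, ∃ dk : ℕ → E,
    Tendsto t atTop atTop ∧ Tendsto dk atTop (𝓝 d) ∧
    L = liminf (fun k => (((t k)⁻¹ : ℝ) : EReal) * f (t k • dk k)) atTop}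

/-- q-asymptotic function. -/
def qAsympFun (f : E → EReal) (u : E) : EReal :=
  ⨆ x ∈ {x : E | f x ≠ ⊤}, ⨆ t ∈ Set.Ioi (0:ℝ), ((t⁻¹ : ℝ) : EReal) * (f (x + t • u) - f x)

/-- A proper function: never `⊥` and not identically `⊤`. -/
def ERealProper (f : E → EReal) : Prop := (∀ x, f x ≠ ⊥) ∧ ∃ x, f x ≠ ⊤

/-- Convexity for extended-real-valued functions. -/
def ERealConvexFn (f : E → EReal) : Prop :=
  ∀ x y : E, ∀ a b : ℝ, 0 ≤ a → 0 ≤ b → a + b = 1 →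
    f (a • x + b • y) ≤ (a : EReal) * f x + (b : EReal) * f y

/-- Quasiconvexity for extended-real-valued functions. -/
def ERealQuasiconvex (f : E → EReal) : Prop :=
  ∀ x y : E, ∀ a : ℝ, 0 ≤ a → a ≤ 1 →
    f (a • x + (1 - a) • y) ≤ max (f x) (f y)

/-- Solution set of the linearly perturbed problem `inf_{x ∈ X} (f x - ⟪u, x⟫)`. -/
def Sol (f : E → EReal) (X : Set E) (u : E) : Set E :=
  {x ∈ X | ∀ y ∈ X, f x - ((inner ℝ u x : ℝ) : EReal) ≤ f y - ((inner ℝ u y : ℝ) : EReal)}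

/-- Optimal value function of the perturbed problem. -/
def valFn (f : E → EReal) (X : Set E) (u : E) : EReal :=
  ⨅ x ∈ X, (f x - ((inner ℝ u x : ℝ) : EReal))

/-!
Take a nonzero direction `d` in the asymptotic cone of `X` with `f^∞(d) ≤ 0`. Since `X` is
closed and convex, the ray `x₀ + s d` (`s ≥ 0`) from a point `x₀ ∈ dom f ∩ X` stays in `X`, and
since `f` is convex and lsc, `f` does not increase along it. For `u = d / (k + 1)` the linear
term `⟪u, x₀ + s d⟫` grows like `s ‖d‖² / (k + 1)`, so the perturbed objective has infimum `-∞`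
on `X`; as `f` never takes the value `⊥`, no point of `X` attains it.
-/

theorem LowerSemicontinuousAt.le_of_frequently_le {α β γ : Type*} [TopologicalSpace α]
    [LinearOrder β] [TopologicalSpace β] [OrderTopology β] [DenselyOrdered β]
    {f : α → β} {p : α} (hf : LowerSemicontinuousAt f p) {l : Filter γ} {g : γ → α}
    (hg : Tendsto g l (𝓝 p)) {c : γ → β} {L : β} (hc : Tendsto c l (𝓝 L))
    (h : ∃ᶠ k in l, f (g k) ≤ c k) : f p ≤ L := by
  by_contra! hL
  obtain ⟨y, hLy, hyp⟩ := exists_between hL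
  obtain ⟨k, hfc, hcy, hyf⟩ :=
    (h.and_eventually ((hc.eventually_lt_const hLy).and (hg.eventually (hf y hyp)))).exists
  exact (hfc.trans_lt hcy).not_gt hyf

theorem tendsto_one_sub_div_smul_add_smul {F : Type*} [AddCommGroup F] [Module ℝ F]
    [TopologicalSpace F] [ContinuousAdd F] [ContinuousSMul ℝ F] {γ : Type*} {l : Filter γ}
    {t : γ → ℝ} (ht : Tendsto t l atTop) (x : F) (s : ℝ) {y : γ → F} {v : F}
    (hy : Tendsto y l (𝓝 v)) :
    Tendsto (fun k => (1 - s / t k) • x + s • y k) l (𝓝 (x + s • v)) := by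
  have hcoef : Tendsto (fun k => 1 - s / t k) l (𝓝 1) := by
    simpa using (ht.const_div_atTop s).const_sub 1
  simpa using (hcoef.smul_const x).add (hy.const_smul s)

theorem zero_mem_asympCone {X : Set E} {x : E} (hx : x ∈ X) : (0 : E) ∈ asympCone X :=
  ⟨fun k : ℕ => (k : ℝ), fun _ => x, tendsto_natCast_atTop_atTop, fun _ => hx,
    by simpa using
      (tendsto_inv_atTop_zero.comp (tendsto_natCast_atTop_atTop (R := ℝ))).smul_const x⟩

theorem add_smul_mem_of_mem_asympCone {X : Set E} (hXcl : IsClosed X) (hXconv : Convex ℝ X)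
    {d : E} (hd : d ∈ asympCone X) {x : E} (hx : x ∈ X) {s : ℝ} (hs : 0 ≤ s) :
    x + s • d ∈ X := by
  obtain ⟨t, xs, ht, hxs, hlim⟩ := hd
  refine hXcl.mem_of_tendsto (tendsto_one_sub_div_smul_add_smul ht x s hlim) ?_
  filter_upwards [ht.eventually_ge_atTop s, ht.eventually_gt_atTop 0] with k hks hk0
  have hmem := hXconv hx (hxs k) (sub_nonneg.2 (div_le_one_of_le₀ hks hk0.le))
    (div_nonneg hs hk0.le) (sub_add_cancel 1 (s / t k))
  rwa [smul_smul, ← div_eq_mul_inv]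

theorem le_add_of_asympFun_lt {f : E → EReal} (hlsc : LowerSemicontinuous f)
    (hconv : ERealConvexFn f) {d : E} {ε : ℝ} (hd : asympFun f d < ε) {x : E} {a : ℝ}
    (hx : f x = a) {s : ℝ} (hs : 0 ≤ s) : f (x + s • d) ≤ ((a + s * ε : ℝ) : EReal) := by
  obtain ⟨_, ⟨t, dk, ht, hdk, rfl⟩, hlt⟩ := sInf_lt_iff.1 hd
  have hfreq : ∃ᶠ k in atTop, (((t k)⁻¹ : ℝ) : EReal) * f (t k • dk k) < ε :=
    frequently_lt_of_liminf_lt (by isBoundedDefault) hlt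
  have hbound : Tendsto (fun k => (((1 - s / t k) * a + s * ε : ℝ) : EReal)) atTop
      (𝓝 ((a + s * ε : ℝ) : EReal)) := by
    refine EReal.tendsto_coe.2 ?_
    simpa using (((ht.const_div_atTop s).const_sub 1).mul_const a).add_const (s * ε)
  refine LowerSemicontinuousAt.le_of_frequently_le (hlsc _)
    (tendsto_one_sub_div_smul_add_smul ht x s hdk) hbound
    ((hfreq.and_eventually ((ht.eventually_ge_atTop s).and (ht.eventually_gt_atTop 0))).mono ?_)
  rintro k ⟨hk, hks, hk0⟩
  have hpoint : (1 - s / t k) • x + s • dk k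
      = (1 - s / t k) • x + (s / t k) • (t k • dk k) := by
    rw [smul_smul, div_mul_cancel₀ s hk0.ne']
  calc f ((1 - s / t k) • x + s • dk k)
      ≤ ((1 - s / t k : ℝ) : EReal) * f x + ((s / t k : ℝ) : EReal) * f (t k • dk k) :=
        hpoint ▸ hconv _ _ _ _ (sub_nonneg.2 (div_le_one_of_le₀ hks hk0.le))
          (div_nonneg hs hk0.le) (sub_add_cancel 1 (s / t k))
    _ = (((1 - s / t k) * a : ℝ) : EReal)
          + (s : EReal) * ((((t k)⁻¹ : ℝ) : EReal) * f (t k • dk k)) := by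
        rw [hx, div_eq_mul_inv, EReal.coe_mul, EReal.coe_mul, mul_assoc]
    _ ≤ (((1 - s / t k) * a : ℝ) : EReal) + (s : EReal) * (ε : EReal) := by gcongr
    _ = (((1 - s / t k) * a + s * ε : ℝ) : EReal) := by norm_cast

theorem le_of_asympFun_nonpos {f : E → EReal} (hlsc : LowerSemicontinuous f)
    (hconv : ERealConvexFn f) {d : E} (hd : asympFun f d ≤ 0) {x : E} {a : ℝ} (hx : f x = a)
    {s : ℝ} (hs : 0 ≤ s) : f (x + s • d) ≤ a := by
  have hlim : Tendsto (fun ε : ℝ => ((a + s * ε : ℝ) : EReal)) (𝓝[>] 0) (𝓝 (a : EReal)) := by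
    refine EReal.tendsto_coe.2 (tendsto_nhdsWithin_of_tendsto_nhds ?_)
    simpa using ((continuous_const_mul s).tendsto 0).const_add a
  refine ge_of_tendsto hlim (eventually_nhdsWithin_of_forall fun ε hε => ?_)
  exact le_add_of_asympFun_lt hlsc hconv (hd.trans_lt (by exact_mod_cast hε)) hx hs

theorem asympFun_zero_nonpos {f : E → EReal} {x : E} {a : ℝ} (hx : f x = a) :
    asympFun f 0 ≤ 0 := by
  have ht : Tendsto (fun k : ℕ => (k : ℝ) + 1) atTop atTop :=
    tendsto_atTop_add_const_right _ 1 tendsto_natCast_atTop_atTop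
  have hinv : Tendsto (fun k : ℕ => ((k : ℝ) + 1)⁻¹) atTop (𝓝 0) :=
    tendsto_inv_atTop_zero.comp ht
  refine sInf_le_of_le ⟨fun k : ℕ => (k : ℝ) + 1, fun k => ((k : ℝ) + 1)⁻¹ • x, ht,
    by simpa using hinv.smul_const x, rfl⟩ (le_of_eq ?_)
  simp only [smul_inv_smul₀ (Nat.cast_add_one_ne_zero (R := ℝ) _), hx, ← EReal.coe_mul]
  exact (EReal.tendsto_coe.2 (by simpa using hinv.mul_const a)).liminf_eq

theorem Sol_eq_empty_of_valFn_eq_bot {f : E → EReal} {X : Set E} {u : E}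
    (hbot : ∀ x, f x ≠ ⊥) (hval : valFn f X u = ⊥) : Sol f X u = ∅ := by
  refine eq_empty_iff_forall_notMem.2 fun z ⟨hzX, hzmin⟩ => hbot z ?_
  have hz : f z - ((inner ℝ u z : ℝ) : EReal) = ⊥ := eq_bot_iff.2 (hval ▸ le_iInf₂ hzmin)
  rw [sub_eq_add_neg, ← EReal.coe_neg, EReal.add_eq_bot_iff] at hz
  simpa using hz

theorem valFn_eq_bot_of_ray {f : E → EReal} {X : Set E} {u x d : E} {a : ℝ}
    (hray : ∀ s : ℝ, 0 ≤ s → x + s • d ∈ X) (hdesc : ∀ s : ℝ, 0 ≤ s → f (x + s • d) ≤ a)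
    (hud : 0 < inner ℝ u d) : valFn f X u = ⊥ := by
  have hlim : Tendsto (fun s : ℝ => ((a - inner ℝ u x - s * inner ℝ u d : ℝ) : EReal))
      atTop (𝓝 ⊥) :=
    EReal.tendsto_coe_atBot.comp <| tendsto_atBot_add_const_left _ _ <|
      tendsto_neg_atTop_atBot.comp (tendsto_id.atTop_mul_const hud)
  refine eq_bot_iff.2 (ge_of_tendsto hlim (eventually_atTop.2 ⟨0, fun s hs => ?_⟩))
  calc valFn f X u ≤ f (x + s • d) - ((inner ℝ u (x + s • d) : ℝ) : EReal) :=
        iInf₂_le _ (hray s hs)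
    _ ≤ (a : EReal) - ((inner ℝ u (x + s • d) : ℝ) : EReal) :=
        EReal.sub_le_sub (hdesc s hs) le_rfl
    _ = ((a - inner ℝ u x - s * inner ℝ u d : ℝ) : EReal) := by
        rw [inner_add_right, real_inner_smul_right, ← EReal.coe_sub]
        ring_nf

theorem stmt12_general {n : ℕ} (f : EuclideanSpace ℝ (Fin n) → EReal)
    (X : Set (EuclideanSpace ℝ (Fin n)))
    (hXcl : IsClosed X) (hXconv : Convex ℝ X)
    (hproper : ERealProper f) (hlsc : LowerSemicontinuous f) (hconv : ERealConvexFn f)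
    (hunb : ¬ Bornology.IsBounded ({x | f x ≠ ⊤} ∩ X))
    (hcone : asympCone X ∩ {d | asympFun f d ≤ 0} ≠ {0}) :
    ∃ u : ℕ → EuclideanSpace ℝ (Fin n), Tendsto u atTop (𝓝 0) ∧
      ∀ k : ℕ, Sol f X (u k) = ∅ := by
  obtain ⟨x₀, hx₀f, hx₀X⟩ := Bornology.nonempty_of_not_isBounded hunb
  have ha : f x₀ = ((f x₀).toReal : EReal) := (EReal.coe_toReal hx₀f (hproper.1 x₀)).symm
  obtain ⟨d, ⟨hdX, hdf⟩, hd0⟩ : ∃ d ∈ asympCone X ∩ {d | asympFun f d ≤ 0}, d ≠ 0 := by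
    by_contra! h
    exact hcone (eq_singleton_iff_unique_mem.2
      ⟨⟨zero_mem_asympCone hx₀X, asympFun_zero_nonpos ha⟩, h⟩)
  refine ⟨fun k => ((k : ℝ) + 1)⁻¹ • d,
    by simpa using (tendsto_one_div_add_atTop_nhds_zero_nat (𝕜 := ℝ)).smul_const d,
    fun k => ?_⟩
  refine Sol_eq_empty_of_valFn_eq_bot hproper.1 (valFn_eq_bot_of_ray
    (fun s hs => add_smul_mem_of_mem_asympCone hXcl hXconv hdX hx₀X hs)
    (fun s hs => le_of_asympFun_nonpos hlsc hconv hdf ha hs) ?_)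
  rw [real_inner_smul_left, real_inner_self_eq_norm_sq]
  have := norm_pos_iff.2 hd0
  positivity

theorem stmt12 {n : ℕ} (f : EuclideanSpace ℝ (Fin n) → EReal)
    (X : Set (EuclideanSpace ℝ (Fin n)))
    (hne : X.Nonempty) (hXcl : IsClosed X) (hXconv : Convex ℝ X)
    (hproper : ERealProper f) (hlsc : LowerSemicontinuous f) (hconv : ERealConvexFn f)
    (hunb : ¬ Bornology.IsBounded ({x | f x ≠ ⊤} ∩ X))
    (hcone : asympCone X ∩ {d | asympFun f d ≤ 0} ≠ {0}) :
    ∃ u : ℕ → EuclideanSpace ℝ (Fin n), Tendsto u atTop (𝓝 0) ∧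
      ∀ k : ℕ, Sol f X (u k) = ∅ :=
  stmt12_general f X hXcl hXconv hproper hlsc hconv hunb hcone
end
end

section
/- Let f : ℝⁿ → ℝ ∪ {+∞} be proper lsc with lsc q-asymptotic function f^∞_q, and X ⊆ ℝⁿ closed. If X^∞ ∩ {d : f^∞_q(d) ≤ 0} = {0}, then there exists ε > 0 such that X^∞ ∩ {d : (f_u)^∞_q(d) ≤ 0} = {0} for all u with ‖u‖ < ε, where f_u(x) = f(x) − ⟨u, x⟩. -/
open Filter Topology Metric Set RealInnerProductSpace

noncomputable section

variable {E : Type*} [NormedAddCommGroup E] [InnerProductSpace ℝ E]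

/-!
Perturbing `f` by the linear form `-⟪u, ·⟫` shifts its q-asymptotic function by `-⟪u, d⟫`.
The cone `asympCone X` is closed, so its trace `K` on the unit sphere is compact, and by
hypothesis the lower semicontinuous function `qAsympFun f` is positive on `K`; hence it is
bounded below on `K` by some `ε > 0`. If `‖u‖ < ε` and `d ≠ 0` lies in `asympCone X` with
`qAsympFun f d ≤ ⟪u, d⟫`, then by positive homogeneity `d / ‖d‖ ∈ K` has
`qAsympFun f (d / ‖d‖) ≤ ‖u‖ < ε`, a contradiction.
-/

namespace EReal

lemma sub_coe_eq_top_iff {a : EReal} {r : ℝ} : a - r = ⊤ ↔ a = ⊤ := by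
  induction a using EReal.rec with
  | bot => simp
  | coe x => exact ⟨fun h => absurd h (coe_ne_top (x - r)), fun h => absurd h (coe_ne_top x)⟩
  | top => simp

lemma iSup_sub_coe {ι : Sort*} (g : ι → EReal) (c : ℝ) :
    (⨆ i, g i) - c = ⨆ i, (g i - c) := by
  refine le_antisymm (sub_le_of_le_add (iSup_le fun i => ?_))
    (iSup_le fun i => sub_le_sub (le_iSup g i) le_rfl)
  calc g i = g i - c + c := sub_add_cancel.symm
    _ ≤ (⨆ i, (g i - c)) + c := add_le_add_left (le_iSup (fun i => g i - c) i) _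

end EReal

lemma coe_inv_mul_sub_inner_sub {u d x : E} {t : ℝ} (ht : 0 < t) {a : EReal} (ha : a ≠ ⊥)
    (b : ℝ) :
    ((t⁻¹ : ℝ) : EReal) *
        ((a - ((⟪u, x + t • d⟫ : ℝ) : EReal)) - ((b : EReal) - (⟪u, x⟫ : ℝ)))
      = ((t⁻¹ : ℝ) : EReal) * (a - b) - (⟪u, d⟫ : ℝ) := by
  induction a using EReal.rec with
  | bot => exact absurd rfl ha
  | coe y =>
    rw [inner_add_right, real_inner_smul_right]
    norm_cast
    field_simp
    ring
  | top => simp [EReal.coe_mul_top_of_pos (inv_pos.2 ht), ← EReal.coe_sub]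

theorem qAsympFun_sub_inner {f : E → EReal} (hf : ∀ x, f x ≠ ⊥) (u d : E) :
    qAsympFun (fun x => f x - ((⟪u, x⟫ : ℝ) : EReal)) d =
      qAsympFun f d - (⟪u, d⟫ : ℝ) := by
  simp only [qAsympFun, EReal.iSup_sub_coe, ne_eq, EReal.sub_coe_eq_top_iff]
  refine iSup_congr fun x => iSup_congr fun hx =>
    iSup_congr fun t => iSup_congr fun ht => ?_
  rw [← EReal.coe_toReal hx (hf x)]
  exact coe_inv_mul_sub_inner_sub ht (hf _) _

theorem qAsympFun_smul_le (f : E → EReal) {c : ℝ} (hc : 0 < c) (d : E) :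
    qAsympFun f (c • d) ≤ (c : EReal) * qAsympFun f d := by
  refine iSup₂_le fun x hx => iSup₂_le fun t (ht : 0 < t) => ?_
  have hscale : ((t⁻¹ : ℝ) : EReal) = (c : EReal) * (((t * c)⁻¹ : ℝ) : EReal) := by
    norm_cast
    field_simp
  rw [smul_smul, hscale, mul_assoc]
  exact mul_le_mul_of_nonneg_left (le_iSup₂_of_le x hx (le_iSup₂_of_le (t * c) (mul_pos ht hc)
    le_rfl)) (EReal.coe_nonneg.2 hc.le)

theorem qAsympFun_inv_norm_smul_le_norm {f : E → EReal} {u d : E} (hd : d ≠ 0)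
    (h : qAsympFun f d ≤ (⟪u, d⟫ : ℝ)) : qAsympFun f (‖d‖⁻¹ • d) ≤ ‖u‖ := by
  have hd' : 0 < ‖d‖⁻¹ := inv_pos.2 (norm_pos_iff.2 hd)
  calc qAsympFun f (‖d‖⁻¹ • d) ≤ ((‖d‖⁻¹ : ℝ) : EReal) * qAsympFun f d :=
        qAsympFun_smul_le f hd' d
    _ ≤ ((‖d‖⁻¹ : ℝ) : EReal) * (⟪u, d⟫ : ℝ) :=
        mul_le_mul_of_nonneg_left h (EReal.coe_nonneg.2 hd'.le)
    _ ≤ ‖u‖ := by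
        norm_cast
        calc ‖d‖⁻¹ * ⟪u, d⟫ ≤ ‖d‖⁻¹ * (‖u‖ * ‖d‖) :=
              mul_le_mul_of_nonneg_left (real_inner_le_norm u d) hd'.le
          _ = ‖u‖ := by field_simp [norm_ne_zero_iff.2 hd]

theorem asympCone_smul {X : Set E} {d : E} (hd : d ∈ asympCone X) {c : ℝ} (hc : 0 < c) :
    c • d ∈ asympCone X := by
  obtain ⟨t, x, ht, hxX, hlim⟩ := hd
  refine ⟨fun k => c⁻¹ * t k, x, ht.const_mul_atTop (inv_pos.2 hc), hxX, ?_⟩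
  refine (hlim.const_smul c).congr fun k => ?_
  rw [mul_inv, inv_inv, smul_smul]

theorem isSeqClosed_asympCone (X : Set E) : IsSeqClosed (asympCone X) := by
  intro g e hg hge
  -- a diagonal sequence: for the `m`-th point of the cone, one term of its defining sequence
  -- with scale at least `m + 1` and within `1 / (m + 1)` of it
  have hdiag : ∀ m : ℕ, ∃ T : ℝ, ∃ y ∈ X, (m : ℝ) + 1 ≤ T ∧
      dist (T⁻¹ • y) (g m) < 1 / ((m : ℝ) + 1) := by
    intro m
    obtain ⟨t, x, ht, hxX, hlim⟩ := hg m
    obtain ⟨k, hkt, hkx⟩ := ((ht.eventually_ge_atTop ((m : ℝ) + 1)).and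
      (Metric.tendsto_nhds.1 hlim _ Nat.one_div_pos_of_nat)).exists
    exact ⟨t k, x k, hxX k, hkt, hkx⟩
  choose T y hyX hT hdist using hdiag
  refine ⟨T, y, tendsto_atTop_mono hT (tendsto_atTop_add_const_right _ 1
    tendsto_natCast_atTop_atTop), hyX, tendsto_iff_dist_tendsto_zero.2 ?_⟩
  refine squeeze_zero (fun m => dist_nonneg)
    (fun m => (dist_triangle _ (g m) e).trans (add_le_add (hdist m).le le_rfl)) ?_
  simpa using tendsto_one_div_add_atTop_nhds_zero_nat.add (tendsto_iff_dist_tendsto_zero.1 hge)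

theorem isClosed_asympCone (X : Set E) : IsClosed (asympCone X) :=
  (isSeqClosed_asympCone X).isClosed

theorem IsCompact.exists_coe_lt_of_lowerSemicontinuous {α : Type*} [TopologicalSpace α]
    {K : Set α} (hK : IsCompact K) {g : α → EReal} (hg : LowerSemicontinuous g)
    (hpos : ∀ x ∈ K, 0 < g x) : ∃ ε > (0 : ℝ), ∀ x ∈ K, (ε : EReal) < g x := by
  rcases K.eq_empty_or_nonempty with rfl | hne
  · exact ⟨1, one_pos, by simp⟩
  obtain ⟨x₀, hx₀, hmin⟩ :=
    LowerSemicontinuousOn.exists_isMinOn hne hK (hg.lowerSemicontinuousOn K)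
  obtain ⟨ε, hε0, hε⟩ := EReal.lt_iff_exists_real_btwn.1 (hpos x₀ hx₀)
  exact ⟨ε, EReal.coe_pos.1 hε0, fun x hx => hε.trans_le (isMinOn_iff.1 hmin x hx)⟩

theorem stmt18_general {n : ℕ} (f : EuclideanSpace ℝ (Fin n) → EReal)
    (X : Set (EuclideanSpace ℝ (Fin n)))
    (hproper : ERealProper f)
    (hqlsc : LowerSemicontinuous (qAsympFun f))
    (hcone : asympCone X ∩ {d | qAsympFun f d ≤ 0} = {0}) :
    ∃ ε > (0:ℝ), ∀ u : EuclideanSpace ℝ (Fin n), ‖u‖ < ε →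
      asympCone X ∩
        {d | qAsympFun (fun x => f x - ((inner ℝ u x : ℝ) : EReal)) d ≤ 0} = {0} := by
  have hK : IsCompact (asympCone X ∩ sphere 0 1) :=
    (isCompact_sphere 0 1).inter_left (isClosed_asympCone X)
  have hpos : ∀ e ∈ asympCone X ∩ sphere 0 1, 0 < qAsympFun f e := by
    rintro e ⟨heX, he1⟩
    by_contra! hle
    have he0 : e ∈ ({0} : Set _) := hcone ▸ ⟨heX, hle⟩
    simp_all
  obtain ⟨ε, hε, hεK⟩ := hK.exists_coe_lt_of_lowerSemicontinuous hqlsc hpos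
  refine ⟨ε, hε, fun u hu => ?_⟩
  have h0 : (0 : EuclideanSpace ℝ (Fin n)) ∈ asympCone X ∩ {d | qAsympFun f d ≤ 0} :=
    hcone ▸ rfl
  ext d
  simp only [mem_inter_iff, mem_ofPred_eq, qAsympFun_sub_inner hproper.1, EReal.sub_nonpos,
    mem_singleton_iff]
  refine ⟨fun ⟨hdX, hdq⟩ => by_contra fun hd => ?_, fun hd => hd ▸ by simpa using h0⟩
  have hdK : ‖d‖⁻¹ • d ∈ asympCone X ∩ sphere 0 1 :=
    ⟨asympCone_smul hdX (inv_pos.2 (norm_pos_iff.2 hd)), by simp [norm_smul, hd]⟩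
  exact (hεK _ hdK).not_ge
    ((qAsympFun_inv_norm_smul_le_norm hd hdq).trans (EReal.coe_le_coe_iff.2 hu.le))

theorem stmt18 {n : ℕ} (f : EuclideanSpace ℝ (Fin n) → EReal)
    (X : Set (EuclideanSpace ℝ (Fin n)))
    (hproper : ERealProper f) (hlsc : LowerSemicontinuous f)
    (hqlsc : LowerSemicontinuous (qAsympFun f)) (hX : IsClosed X)
    (hcone : asympCone X ∩ {d | qAsympFun f d ≤ 0} = {0}) :
    ∃ ε > (0:ℝ), ∀ u : EuclideanSpace ℝ (Fin n), ‖u‖ < ε →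
      asympCone X ∩
        {d | qAsympFun (fun x => f x - ((inner ℝ u x : ℝ) : EReal)) d ≤ 0} = {0} :=
  stmt18_general f X hproper hqlsc hcone
end
end

section
/- Let X ⊆ ℝⁿ be convex, f quasiconvex with X ⊆ dom f, and suppose Sol(0) = argmin_X f = {x̄} but there exists d ∈ X^∞, d ≠ 0, with f^∞_q(d) ≤ 0. Then for uₖ := d/k, one has (f_{uₖ})^∞_q(d) < 0, f_{uₖ}(x̄ + t d) → −∞ as t → ∞, and Sol(uₖ) = ∅ for every k; hence the solution map is not lower semicontinuous at 0. -/
open Filter Topology Metric Set RealInnerProductSpace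

noncomputable section

variable {E : Type*} [NormedAddCommGroup E] [InnerProductSpace ℝ E]

/-
`qAsympFun f d ≤ 0` says exactly that `f` does not increase along `d` from any point of its
domain. Hence for `u = d / k`, where `⟪u, d⟫ = ‖d‖² / k > 0`, the perturbed objective
`f x - ⟪u, x⟫` decreases with slope at least `⟪u, d⟫` along every ray `x + t • d`, and tends
to `-∞` there. As `X` need not be closed, such a ray lies in `X` only from a point `y` of
the relative interior: `y + τ • d` is a convex combination of a point `x k` of a sequence with
`x k / t k → d` and a point of the affine span close to `y`. So no `u = d / k` has a minimizer,
although `u → 0` and the minimizer for `u = 0` exists.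
-/

theorem exists_ball_inter_affineSpan_subset_of_mem_intrinsicInterior {X : Set E} {y : E}
    (hy : y ∈ intrinsicInterior ℝ X) : ∃ ε > 0, ball y ε ∩ affineSpan ℝ X ⊆ X := by
  obtain ⟨y', hy', rfl⟩ := hy
  obtain ⟨ε, hε, hball⟩ := Metric.isOpen_iff.1 isOpen_interior y' hy'
  exact ⟨ε, hε, fun z ⟨hzy, hz⟩ => interior_subset (s := ((↑) ⁻¹' X : Set (affineSpan ℝ X)))
    (hball (show ⟨z, hz⟩ ∈ ball y' ε from hzy))⟩

theorem Convex.add_smul_mem_of_mem_intrinsicInterior_of_mem_asympCone [FiniteDimensional ℝ E]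
    {X : Set E} (hX : Convex ℝ X) {y : E} (hy : y ∈ intrinsicInterior ℝ X) {d : E}
    (hd : d ∈ asympCone X) {τ : ℝ} (hτ : 0 ≤ τ) : y + τ • d ∈ X := by
  obtain ⟨ε, hε, hball⟩ := exists_ball_inter_affineSpan_subset_of_mem_intrinsicInterior hy
  obtain ⟨t, x, ht, hxX, hlim⟩ := hd
  have hyA : y ∈ affineSpan ℝ X := subset_affineSpan ℝ X (intrinsicInterior_subset hy)
  set v : ℕ → E := fun k => (t k)⁻¹ • (x k - y) with hv
  have hvA : ∀ k, v k ∈ (affineSpan ℝ X).direction := fun k =>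
    Submodule.smul_mem _ _ (AffineSubspace.vsub_mem_direction
      (subset_affineSpan ℝ X (hxX k)) hyA)
  have hvd : Tendsto v atTop (𝓝 d) := by
    have hy0 : Tendsto (fun k => (t k)⁻¹ • y) atTop (𝓝 0) := by
      simpa using ht.inv_tendsto_atTop.smul_const y
    simpa [hv, smul_sub] using hlim.sub hy0
  have hdA : d ∈ (affineSpan ℝ X).direction :=
    (Submodule.closed_of_finiteDimensional _).mem_of_tendsto hvd (Eventually.of_forall hvA)
  have hsmall : Tendsto (fun k => τ * ‖d - v k‖) atTop (𝓝 0) := by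
    simpa using ((tendsto_const_nhds (x := d)).sub hvd).norm.const_mul τ
  obtain ⟨k, htk, hvk⟩ := ((ht.eventually_ge_atTop (2 * τ + 1)).and
    (hsmall.eventually (gt_mem_nhds (half_pos hε)))).exists
  have htpos : 0 < t k := by linarith
  set l := τ / t k with hl
  have hl0 : 0 ≤ l := div_nonneg hτ htpos.le
  have hl1 : l ≤ 1 / 2 := by rw [hl, div_le_iff₀ htpos]; linarith
  set z := (1 - l)⁻¹ • τ • (d - v k) + y with hz
  -- `y + τ • d` lies on the segment from `z`, a point close to `y`, to `x k`.
  have hzX : z ∈ X := by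
    refine hball ⟨?_, AffineSubspace.vadd_mem_of_mem_direction ?_ hyA⟩
    · rw [mem_ball, hz, dist_eq_norm, add_sub_cancel_right, norm_smul, norm_smul, Real.norm_eq_abs,
        Real.norm_eq_abs, abs_of_nonneg (inv_pos.2 (by linarith)).le, abs_of_nonneg hτ, ← mul_assoc]
      calc (1 - l)⁻¹ * τ * ‖d - v k‖ ≤ 2 * (τ * ‖d - v k‖) := by
            rw [mul_assoc]
            gcongr
            rw [inv_le_comm₀ (by linarith) two_pos]; linarith
        _ < ε := by linarith
    · exact Submodule.smul_mem _ _ (Submodule.smul_mem _ _ (Submodule.sub_mem _ hdA (hvA k)))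
  have hcomb : (1 - l) • z + l • x k = y + τ • d := by
    have hτv : τ • v k = l • (x k - y) := by rw [hv, hl, smul_smul, div_eq_mul_inv]
    rw [hz, smul_add, smul_inv_smul₀ (by linarith), smul_sub, hτv]
    module
  rw [← hcomb]
  exact hX hzX (hxX k) (by linarith) hl0 (by ring)

theorem EReal.exists_eq_coe_of_ne_top_of_ne_bot {a : EReal} (ha : a ≠ ⊤) (ha' : a ≠ ⊥) :
    ∃ r : ℝ, a = r :=
  ⟨a.toReal, (EReal.coe_toReal ha ha').symm⟩

section PerturbedDescent

variable {f : E → EReal} {d : E}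

theorem le_qAsympFun {x : E} (hx : f x ≠ ⊤) {t : ℝ} (ht : 0 < t) :
    ((t⁻¹ : ℝ) : EReal) * (f (x + t • d) - f x) ≤ qAsympFun f d := by
  unfold qAsympFun
  exact le_iSup₂_of_le x hx (le_iSup₂_of_le t ht le_rfl)

theorem apply_add_smul_le_of_qAsympFun_nonpos (hqd : qAsympFun f d ≤ 0) {x : E}
    (hx : f x ≠ ⊤) {t : ℝ} (ht : 0 < t) : f (x + t • d) ≤ f x := by
  rcases EReal.mul_nonpos_iff.1 ((le_qAsympFun hx ht).trans hqd) with ⟨-, h⟩ | ⟨h, -⟩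
  · exact EReal.sub_nonpos.1 h
  · exact absurd (EReal.coe_nonpos.1 h) (not_le.2 (inv_pos.2 ht))

theorem perturbed_add_smul_le (hqd : qAsympFun f d ≤ 0) (u : E) {x : E} {r : ℝ}
    (hr : f x = r) {t : ℝ} (ht : 0 < t) :
    f (x + t • d) - ((⟪u, x + t • d⟫ : ℝ) : EReal) ≤ ((r - ⟪u, x⟫ - t * ⟪u, d⟫ : ℝ) : EReal) := by
  have hdesc := apply_add_smul_le_of_qAsympFun_nonpos hqd (hr ▸ EReal.coe_ne_top r) ht
  rw [hr] at hdesc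
  calc f (x + t • d) - ((⟪u, x + t • d⟫ : ℝ) : EReal)
      ≤ (r : EReal) - ((⟪u, x + t • d⟫ : ℝ) : EReal) := EReal.sub_le_sub hdesc le_rfl
    _ = ((r - ⟪u, x⟫ - t * ⟪u, d⟫ : ℝ) : EReal) := by
      rw [inner_add_right, real_inner_smul_right, ← EReal.coe_sub, sub_add_eq_sub_sub]

theorem qAsympFun_perturbed_le (hbot : ∀ x, f x ≠ ⊥) (hqd : qAsympFun f d ≤ 0) (u : E) :
    qAsympFun (fun x => f x - ((⟪u, x⟫ : ℝ) : EReal)) d ≤ ((-⟪u, d⟫ : ℝ) : EReal) := by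
  refine iSup₂_le fun x hx => iSup₂_le fun t (ht : 0 < t) => ?_
  have hxtop : f x ≠ ⊤ := fun h => hx (by simp only [h, EReal.top_sub_coe])
  obtain ⟨r, hr⟩ := EReal.exists_eq_coe_of_ne_top_of_ne_bot hxtop (hbot x)
  have hdesc := apply_add_smul_le_of_qAsympFun_nonpos hqd hxtop ht
  obtain ⟨ρ, hρ⟩ :=
    EReal.exists_eq_coe_of_ne_top_of_ne_bot (ne_top_of_le_ne_top hxtop hdesc) (hbot _)
  rw [hr, hρ, EReal.coe_le_coe_iff] at hdesc
  simp only [hr, hρ, inner_add_right, real_inner_smul_right]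
  norm_cast
  have : t⁻¹ * (ρ - r) ≤ 0 :=
    mul_nonpos_of_nonneg_of_nonpos (inv_pos.2 ht).le (by linarith)
  calc t⁻¹ * (ρ - (⟪u, x⟫ + t * ⟪u, d⟫) - (r - ⟪u, x⟫)) = t⁻¹ * (ρ - r) - ⟪u, d⟫ := by
        field_simp; ring
    _ ≤ -⟪u, d⟫ := by linarith

theorem tendsto_perturbed_add_smul_atTop (hqd : qAsympFun f d ≤ 0) {u : E}
    (hud : 0 < ⟪u, d⟫) {x : E} {r : ℝ} (hr : f x = r) :
    Tendsto (fun t : ℝ => f (x + t • d) - ((⟪u, x + t • d⟫ : ℝ) : EReal)) atTop (𝓝 ⊥) := by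
  have hlin : Tendsto (fun t : ℝ => r - ⟪u, x⟫ - t * ⟪u, d⟫) atTop atBot := by
    simpa [sub_eq_add_neg] using tendsto_atBot_add_const_left _ (r - ⟪u, x⟫)
      (tendsto_neg_atTop_atBot.comp (tendsto_id.atTop_mul_const hud))
  refine tendsto_nhds_bot_mono (EReal.tendsto_coe_atBot.comp hlin) ?_
  filter_upwards [eventually_gt_atTop 0] with t ht using perturbed_add_smul_le hqd u hr ht

theorem Sol_eq_empty_of_mem_asympCone [FiniteDimensional ℝ E] (hbot : ∀ x, f x ≠ ⊥)
    {X : Set E} (hX : Convex ℝ X) (hdom : X ⊆ {x | f x ≠ ⊤}) (hd : d ∈ asympCone X)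
    (hqd : qAsympFun f d ≤ 0) {u : E} (hud : 0 < ⟪u, d⟫) : Sol f X u = ∅ := by
  refine eq_empty_iff_forall_notMem.2 fun xs ⟨hxsX, hmin⟩ => ?_
  obtain ⟨y, hy⟩ := Set.Nonempty.intrinsicInterior hX ⟨xs, hxsX⟩
  have hyX : y ∈ X := intrinsicInterior_subset hy
  obtain ⟨r, hr⟩ := EReal.exists_eq_coe_of_ne_top_of_ne_bot (hdom hyX) (hbot y)
  obtain ⟨s, hs⟩ := EReal.exists_eq_coe_of_ne_top_of_ne_bot (hdom hxsX) (hbot xs)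
  obtain ⟨τ, hτ, hlt⟩ := ((eventually_ge_atTop 0).and
    ((tendsto_perturbed_add_smul_atTop hqd hud hr).eventually_lt_const
      (EReal.bot_lt_coe (s - ⟪u, xs⟫)))).exists
  have hle := hmin _ (hX.add_smul_mem_of_mem_intrinsicInterior_of_mem_asympCone hy hd hτ)
  rw [hs, ← EReal.coe_sub] at hle
  exact not_lt.2 hle hlt

end PerturbedDescent

theorem stmt19_general {n : ℕ} (f : EuclideanSpace ℝ (Fin n) → EReal)
    (X : Set (EuclideanSpace ℝ (Fin n)))
    (hproper : ERealProper f) (hXconv : Convex ℝ X)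
    (hdom : X ⊆ {x | f x ≠ ⊤})
    (xbar : EuclideanSpace ℝ (Fin n)) (hSol : Sol f X 0 = {xbar})
    (d : EuclideanSpace ℝ (Fin n)) (hd : d ∈ asympCone X) (hd0 : d ≠ 0)
    (hqd : qAsympFun f d ≤ 0) :
    (∀ k : ℕ, 0 < k →
      (qAsympFun (fun x => f x - ((inner ℝ ((1 / (k : ℝ)) • d) x : ℝ) : EReal)) d < 0 ∧
       Tendsto (fun t : ℝ =>
           f (xbar + t • d) - ((inner ℝ ((1 / (k : ℝ)) • d) (xbar + t • d) : ℝ) : EReal))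
         atTop (𝓝 ⊥) ∧
       Sol f X ((1 / (k : ℝ)) • d) = ∅)) ∧
    ¬ ((Sol f X 0).Nonempty ∧
        ∀ V : Set (EuclideanSpace ℝ (Fin n)), IsOpen V → (Sol f X 0 ∩ V).Nonempty →
          ∃ δ > (0:ℝ), ∀ u : EuclideanSpace ℝ (Fin n), ‖u‖ < δ →
            (Sol f X u ∩ V).Nonempty) := by
  have hxbar : xbar ∈ Sol f X 0 := hSol ▸ rfl
  obtain ⟨r, hr⟩ := EReal.exists_eq_coe_of_ne_top_of_ne_bot (hdom hxbar.1) (hproper.1 xbar)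
  have hud : ∀ k : ℕ, 0 < k → 0 < ⟪(1 / (k : ℝ)) • d, d⟫ := fun k hk => by
    rw [real_inner_smul_left, real_inner_self_eq_norm_sq]
    have : (0 : ℝ) < k := Nat.cast_pos.2 hk
    have : 0 < ‖d‖ := norm_pos_iff.2 hd0
    positivity
  have hSol_empty : ∀ k : ℕ, 0 < k → Sol f X ((1 / (k : ℝ)) • d) = ∅ := fun k hk =>
    Sol_eq_empty_of_mem_asympCone hproper.1 hXconv hdom hd hqd (hud k hk)
  refine ⟨fun k hk => ⟨?_, tendsto_perturbed_add_smul_atTop hqd (hud k hk) hr, hSol_empty k hk⟩, ?_⟩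
  · exact (qAsympFun_perturbed_le hproper.1 hqd _).trans_lt
      (by exact_mod_cast neg_neg_of_pos (hud k hk))
  · rintro ⟨-, hlsc⟩
    obtain ⟨δ, hδ, hδSol⟩ := hlsc univ isOpen_univ ⟨xbar, hxbar, trivial⟩
    obtain ⟨k, hk⟩ := exists_nat_gt (‖d‖ / δ)
    have hk0 : (0 : ℝ) < k := (div_nonneg (norm_nonneg d) hδ.le).trans_lt hk
    have hsmall : ‖(1 / (k : ℝ)) • d‖ < δ := by
      rw [norm_smul, Real.norm_eq_abs, abs_of_pos (by positivity), one_div, inv_mul_lt_iff₀ hk0]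
      rwa [div_lt_iff₀ hδ] at hk
    have hne := hδSol _ hsmall
    rw [hSol_empty k (Nat.cast_pos.1 hk0), empty_inter] at hne
    exact not_nonempty_empty hne

theorem stmt19 {n : ℕ} (f : EuclideanSpace ℝ (Fin n) → EReal)
    (X : Set (EuclideanSpace ℝ (Fin n)))
    (hproper : ERealProper f) (hXconv : Convex ℝ X)
    (hq : ERealQuasiconvex f) (hdom : X ⊆ {x | f x ≠ ⊤})
    (xbar : EuclideanSpace ℝ (Fin n)) (hSol : Sol f X 0 = {xbar})
    (d : EuclideanSpace ℝ (Fin n)) (hd : d ∈ asympCone X) (hd0 : d ≠ 0)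
    (hqd : qAsympFun f d ≤ 0) :
    (∀ k : ℕ, 0 < k →
      (qAsympFun (fun x => f x - ((inner ℝ ((1 / (k : ℝ)) • d) x : ℝ) : EReal)) d < 0 ∧
       Tendsto (fun t : ℝ =>
           f (xbar + t • d) - ((inner ℝ ((1 / (k : ℝ)) • d) (xbar + t • d) : ℝ) : EReal))
         atTop (𝓝 ⊥) ∧
       Sol f X ((1 / (k : ℝ)) • d) = ∅)) ∧
    ¬ ((Sol f X 0).Nonempty ∧
        ∀ V : Set (EuclideanSpace ℝ (Fin n)), IsOpen V → (Sol f X 0 ∩ V).Nonempty →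
          ∃ δ > (0:ℝ), ∀ u : EuclideanSpace ℝ (Fin n), ‖u‖ < δ →
            (Sol f X u ∩ V).Nonempty) :=
  stmt19_general f X hproper hXconv hdom xbar hSol d hd hd0 hqd
end
end
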